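/- arXiv:1609.09708 — 10 statements merged into one kernel-verified Lean document; each statement's English description precedes it below -/
import Mathlib

section
/- In any basic lattice B, distributivity holds in the form: z ⪯ x ∨ y if and only if z ⪯ (x ∧ z) ∨ (y ∧ z). -/
/-- A basic lattice: a transitive relation `prec` (≺) with minimum `zero`,
whose reflexivization `ple` (⪯) is a lattice order with meet `inf` and join `sup`,
satisfying coinitiality, cofinality, interpolation, multiplicativity, additivity,
decomposition and complementation. -/
structure BasicLattice (B : Type) where
  prec : B → B → Prop
  zero : B
  inf : B → B → B
  sup : B → B → B
  trans : ∀ {x y z : B}, prec x y → prec y z → prec x z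
  min : ∀ x, prec zero x
  antisymm : ∀ x y, (∀ z, prec z x → prec z y) → (∀ z, prec z y → prec z x) → x = y
  inf_le_left : ∀ x y z, prec z (inf x y) → prec z x
  inf_le_right : ∀ x y z, prec z (inf x y) → prec z y
  le_inf : ∀ x y w, (∀ z, prec z w → prec z x) → (∀ z, prec z w → prec z y) →
    ∀ z, prec z w → prec z (inf x y)
  le_sup_left : ∀ x y z, prec z x → prec z (sup x y)
  le_sup_right : ∀ x y z, prec z y → prec z (sup x y)
  sup_le : ∀ x y w, (∀ z, prec z x → prec z w) → (∀ z, prec z y → prec z w) →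
    ∀ z, prec z (sup x y) → prec z w
  coinit : ∀ x, x ≠ zero → ∃ z, z ≠ zero ∧ prec z x
  cofin : ∀ x, ∃ y, prec x y
  interp : ∀ x y, prec x y → ∃ z, prec x z ∧ prec z y
  mult : ∀ x x' y y', prec x x' → prec y y' → prec (inf x y) (inf x' y')
  add : ∀ x x' y y', prec x x' → prec y y' → prec (sup x y) (sup x' y')
  decomp : ∀ x y z, prec z (sup x y) → ∃ x' y', prec x' x ∧ prec y' y ∧ z = sup x' y'
  compl : ∀ x y z, prec x y → prec y z → ∃ w, inf w x = zero ∧ sup w y = z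

/-- The reflexivization ⪯ of ≺. -/
def BasicLattice.ple {B : Type} (L : BasicLattice B) (x y : B) : Prop :=
  ∀ z, L.prec z x → L.prec z y


/-! A witness `w ≺ z` of `z ⪯ x ∨ y` decomposes as `w = x' ∨ y'` with `x' ≺ x` and `y' ≺ y`.
Both pieces lie below `w ≺ z`, hence are `≺ z`, so multiplicativity gives `x' ≺ x ∧ z` and
`y' ≺ y ∧ z`, and additivity gives `w ≺ (x ∧ z) ∨ (y ∧ z)`. The converse is monotonicity of `∨`. -/

namespace BasicLattice

variable {B : Type} (L : BasicLattice B)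

theorem ple_refl (a : B) : L.ple a a := fun _ h => h

variable {L}

theorem ple_trans {a b c : B} (hab : L.ple a b) (hbc : L.ple b c) : L.ple a c :=
  fun u hu => hbc u (hab u hu)

theorem inf_eq_left_of_ple {a b : B} (h : L.ple a b) : L.inf a b = a :=
  L.antisymm _ _ (L.inf_le_left a b) (L.le_inf a b a (L.ple_refl a) h)

theorem inf_idem (a : B) : L.inf a a = a :=
  inf_eq_left_of_ple (L.ple_refl a)

/-- Pick any `a ≺ t` (cofinality); then `a = a ∧ b ≺ t ∧ c ⪯ c`. -/
theorem prec_of_ple_of_prec {a b c : B} (hab : L.ple a b) (hbc : L.prec b c) : L.prec a c := by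
  obtain ⟨t, hat⟩ := L.cofin a
  have h : L.prec (L.inf a b) (L.inf t c) := L.mult a t b c hat hbc
  rw [inf_eq_left_of_ple hab] at h
  exact L.inf_le_right t c a h

theorem prec_inf {a b c : B} (hb : L.prec a b) (hc : L.prec a c) : L.prec a (L.inf b c) :=
  inf_idem a ▸ L.mult a b a c hb hc

theorem prec_sup_inf_of_prec_sup {w x y z : B} (hxy : L.prec w (L.sup x y)) (hz : L.prec w z) :
    L.prec w (L.sup (L.inf x z) (L.inf y z)) := by
  obtain ⟨x', y', hx', hy', rfl⟩ := L.decomp x y w hxy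
  have hx'z : L.prec x' z := prec_of_ple_of_prec (L.le_sup_left x' y') hz
  have hy'z : L.prec y' z := prec_of_ple_of_prec (L.le_sup_right x' y') hz
  exact L.add _ _ _ _ (prec_inf hx' hx'z) (prec_inf hy' hy'z)

theorem sup_inf_ple_sup (x y z : B) : L.ple (L.sup (L.inf x z) (L.inf y z)) (L.sup x y) :=
  L.sup_le _ _ _ (fun u hu => L.le_sup_left x y u (L.inf_le_left x z u hu))
    (fun u hu => L.le_sup_right x y u (L.inf_le_left y z u hu))

end BasicLattice

/-- Distributivity in a basic lattice: z ⪯ x ∨ y iff z ⪯ (x ∧ z) ∨ (y ∧ z). -/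
theorem basicLattice_distributivity {B : Type} (L : BasicLattice B) (x y z : B) :
    L.ple z (L.sup x y) ↔ L.ple z (L.sup (L.inf x z) (L.inf y z)) :=
  ⟨fun h w hw => L.prec_sup_inf_of_prec_sup (h w hw) hw,
    fun h => BasicLattice.ple_trans h (L.sup_inf_ple_sup x y z)⟩
end

section
/- In any basic lattice B, the 'rather below' characterization holds: x ≺ y if and only if for every z there exists w with w ∧ x = 0 and z ⪯ w ∨ y. -/
/-!
If `x ≺ y`, push `y` and `z` strictly below a common bound `y' ∨ z'` and complement `x` inside it.
Conversely, pick `x ≺ t` and a `w ⊥ x` with `t ⪯ w ∨ y`; decomposing `x ≺ w ∨ y` writes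
`x = w' ∨ y'` with `w' ≺ w` and `y' ≺ y`, and `w' ⪯ w ∧ x = 0` forces `w' = 0`, so `x = y' ≺ y`.
-/

namespace BasicLattice

variable {B : Type} (L : BasicLattice B)

theorem ple_of_prec {x y : B} (h : L.prec x y) : L.ple x y :=
  fun _ hz => L.trans hz h

theorem ple_sup_left (x y : B) : L.ple x (L.sup x y) :=
  L.le_sup_left x y

theorem ple_sup_right (x y : B) : L.ple y (L.sup x y) :=
  L.le_sup_right x y

theorem eq_zero_of_ple_zero {x : B} (h : L.ple x L.zero) : x = L.zero :=
  L.antisymm x L.zero h fun _ hz => L.trans hz (L.min x)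

theorem eq_zero_of_ple_of_inf_eq_zero {u w x : B} (huw : L.ple u w) (hux : L.ple u x)
    (hwx : L.inf w x = L.zero) : u = L.zero :=
  L.eq_zero_of_ple_zero (hwx ▸ L.le_inf w x u huw hux)

theorem zero_sup (y : B) : L.sup L.zero y = y :=
  L.antisymm _ y (L.sup_le L.zero y y (fun _ hz => L.trans hz (L.min y)) fun _ hz => hz)
    (L.ple_sup_right L.zero y)

theorem exists_inf_eq_zero_ple_sup_of_prec {x y : B} (hxy : L.prec x y) (z : B) :
    ∃ w, L.inf w x = L.zero ∧ L.ple z (L.sup w y) := by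
  obtain ⟨y', hyy'⟩ := L.cofin y
  obtain ⟨z', hzz'⟩ := L.cofin z
  obtain ⟨w, hwx, hwy⟩ := L.compl x y (L.sup y' z') hxy (L.le_sup_left y' z' y hyy')
  exact ⟨w, hwx, hwy ▸ fun v hvz => L.le_sup_right y' z' v (L.trans hvz hzz')⟩

theorem prec_of_prec_sup_of_inf_eq_zero {w x y : B} (hwx : L.inf w x = L.zero)
    (hx : L.prec x (L.sup w y)) : L.prec x y := by
  obtain ⟨w', y', hww', hyy', rfl⟩ := L.decomp w y x hx
  have hw' : w' = L.zero :=
    L.eq_zero_of_ple_of_inf_eq_zero (L.ple_of_prec hww') (L.ple_sup_left w' y') hwx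
  rwa [hw', L.zero_sup]

end BasicLattice

/-- Rather below: in a basic lattice, x ≺ y iff for every z there is w ⊥ x
with z ⪯ w ∨ y. -/
theorem basicLattice_ratherBelow {B : Type} (L : BasicLattice B) (x y : B) :
    L.prec x y ↔ ∀ z : B, ∃ w : B, L.inf w x = L.zero ∧ L.ple z (L.sup w y) := by
  refine ⟨L.exists_inf_eq_zero_ple_sup_of_prec, fun h => ?_⟩
  obtain ⟨t, hxt⟩ := L.cofin x
  obtain ⟨w, hwx, htw⟩ := h t
  exact L.prec_of_prec_sup_of_inf_eq_zero hwx (htw x hxt)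
end

section
/- Let B be a lattice with transitive relation ≺ with minimum 0 whose reflexivization is the lattice order, satisfying cofinality (∀x ∃y, x ≺ y). Then the conjunction of interpolation, multiplicativity, and additivity is equivalent to the conjunction of right auxiliarity (x ⪯ z ≺ y → x ≺ y) and Riesz interpolation (x, x′ ≺ y, y′ → ∃z with x, x′ ≺ z ≺ y, y′). -/
/-! Both conditions are equivalent to right auxiliarity together with the two "lattice
interpolation" rules `x ≺ y, y' → x ≺ y ∧ y'` and `x, x' ≺ y → x ∨ x' ≺ y`.
Multiplicativity (resp. additivity) applied to `x ≺ y, y'` (resp. `x, x' ≺ y`) gives these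
rules outright, and conversely Riesz interpolation gives them by interpolating an element
`z` and using `z ⪯ y ∧ y'` (resp. `x ∨ x' ⪯ z` and right auxiliarity). Right auxiliarity
follows from multiplicativity: with `x ⪯ z ≺ y` and `x ≺ t` by cofinality,
`x = x ∧ z ≺ t ∧ y ⪯ y`. -/

/-- A lattice (with respect to the reflexivization ⪯ of ≺) equipped with a
transitive relation ≺ with minimum 0, satisfying cofinality. -/
structure PreBasicLattice (B : Type) where
  prec : B → B → Prop
  zero : B
  inf : B → B → B
  sup : B → B → B
  trans : ∀ {x y z : B}, prec x y → prec y z → prec x z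
  min : ∀ x, prec zero x
  antisymm : ∀ x y, (∀ z, prec z x → prec z y) → (∀ z, prec z y → prec z x) → x = y
  inf_le_left : ∀ x y z, prec z (inf x y) → prec z x
  inf_le_right : ∀ x y z, prec z (inf x y) → prec z y
  le_inf : ∀ x y w, (∀ z, prec z w → prec z x) → (∀ z, prec z w → prec z y) →
    ∀ z, prec z w → prec z (inf x y)
  le_sup_left : ∀ x y z, prec z x → prec z (sup x y)
  le_sup_right : ∀ x y z, prec z y → prec z (sup x y)
  sup_le : ∀ x y w, (∀ z, prec z x → prec z w) → (∀ z, prec z y → prec z w) →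
    ∀ z, prec z (sup x y) → prec z w
  cofin : ∀ x, ∃ y, prec x y

/-- The reflexivization ⪯ of ≺. -/
def PreBasicLattice.ple {B : Type} (L : PreBasicLattice B) (x y : B) : Prop :=
  ∀ z, L.prec z x → L.prec z y

namespace PreBasicLattice

variable {B : Type} (L : PreBasicLattice B)

def Interpolative : Prop :=
  ∀ x y, L.prec x y → ∃ z, L.prec x z ∧ L.prec z y

def Multiplicative : Prop :=
  ∀ x x' y y', L.prec x x' → L.prec y y' → L.prec (L.inf x y) (L.inf x' y')

def Additive : Prop :=
  ∀ x x' y y', L.prec x x' → L.prec y y' → L.prec (L.sup x y) (L.sup x' y')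

def RightAuxiliary : Prop :=
  ∀ x y z, L.ple x z → L.prec z y → L.prec x y

def RieszInterpolative : Prop :=
  ∀ x x' y y', L.prec x y → L.prec x y' → L.prec x' y → L.prec x' y' →
    ∃ z, L.prec x z ∧ L.prec x' z ∧ L.prec z y ∧ L.prec z y'

def PrecInf : Prop :=
  ∀ x y y', L.prec x y → L.prec x y' → L.prec x (L.inf y y')

def SupPrec : Prop :=
  ∀ x x' y, L.prec x y → L.prec x' y → L.prec (L.sup x x') y

variable {L}

theorem ple_refl (x : B) : L.ple x x := fun _ h => h

theorem ple_of_prec {x y : B} (h : L.prec x y) : L.ple x y := fun _ hz => L.trans hz h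

theorem inf_eq_left_of_ple {x z : B} (h : L.ple x z) : L.inf x z = x :=
  L.antisymm _ _ (L.inf_le_left x z) (L.le_inf x z x (ple_refl x) h)

theorem sup_self (x : B) : L.sup x x = x :=
  L.antisymm _ _ (L.sup_le x x x (ple_refl x) (ple_refl x)) (L.le_sup_left x x)

theorem Multiplicative.rightAuxiliary (hm : L.Multiplicative) : L.RightAuxiliary := by
  intro x y z hxz hzy
  obtain ⟨t, hxt⟩ := L.cofin x
  have h : L.prec (L.inf x z) (L.inf t y) := hm x t z y hxt hzy
  rw [inf_eq_left_of_ple hxz] at h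
  exact L.inf_le_right t y x h

theorem Multiplicative.precInf (hm : L.Multiplicative) : L.PrecInf := by
  intro x y y' hy hy'
  simpa only [inf_eq_left_of_ple (ple_refl x)] using hm x y x y' hy hy'

theorem Additive.supPrec (ha : L.Additive) : L.SupPrec := by
  intro x x' y hx hx'
  simpa only [sup_self] using ha x y x' y hx hx'

theorem RieszInterpolative.interpolative (hR : L.RieszInterpolative) : L.Interpolative := by
  intro x y hxy
  obtain ⟨z, hxz, -, hzy, -⟩ := hR x x y y hxy hxy hxy hxy
  exact ⟨z, hxz, hzy⟩

theorem RieszInterpolative.precInf (hR : L.RieszInterpolative) : L.PrecInf := by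
  intro x y y' hy hy'
  obtain ⟨z, hxz, -, hzy, hzy'⟩ := hR x x y y' hy hy' hy hy'
  exact L.le_inf y y' z (ple_of_prec hzy) (ple_of_prec hzy') x hxz

theorem RieszInterpolative.supPrec (hR : L.RieszInterpolative) (hA : L.RightAuxiliary) :
    L.SupPrec := by
  intro x x' y hx hx'
  obtain ⟨z, hxz, hx'z, hzy, -⟩ := hR x x' y y hx hx hx' hx'
  exact hA _ y z (L.sup_le x x' z (ple_of_prec hxz) (ple_of_prec hx'z)) hzy

theorem RightAuxiliary.multiplicative (hA : L.RightAuxiliary) (hI : L.PrecInf) :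
    L.Multiplicative := fun x x' y y' hx hy =>
  hI _ x' y' (hA _ x' x (L.inf_le_left x y) hx) (hA _ y' y (L.inf_le_right x y) hy)

theorem SupPrec.additive (hS : L.SupPrec) : L.Additive := fun x x' y y' hx hy =>
  hS x y _ (L.le_sup_left x' y' x hx) (L.le_sup_right x' y' y hy)

theorem Interpolative.rieszInterpolative (hi : L.Interpolative) (hA : L.RightAuxiliary)
    (hI : L.PrecInf) (hS : L.SupPrec) : L.RieszInterpolative := by
  intro x x' y y' hxy hxy' hx'y hx'y'
  obtain ⟨z, hz, hzy⟩ := hi _ _ (hS x x' _ (hI x y y' hxy hxy') (hI x' y y' hx'y hx'y'))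
  exact ⟨z, hA x z _ (L.le_sup_left x x') hz, hA x' z _ (L.le_sup_right x x') hz,
    L.inf_le_left y y' z hzy, L.inf_le_right y y' z hzy⟩

end PreBasicLattice

/-- In a lattice with transitive ≺ and cofinality, interpolation plus
multiplicativity plus additivity is equivalent to right auxiliarity plus
Riesz interpolation. -/
theorem interp_mult_add_iff_rightAux_riesz {B : Type} (L : PreBasicLattice B) :
    ((∀ x y, L.prec x y → ∃ z, L.prec x z ∧ L.prec z y) ∧
     (∀ x x' y y', L.prec x x' → L.prec y y' → L.prec (L.inf x y) (L.inf x' y')) ∧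
     (∀ x x' y y', L.prec x x' → L.prec y y' → L.prec (L.sup x y) (L.sup x' y')))
    ↔
    ((∀ x y z, L.ple x z → L.prec z y → L.prec x y) ∧
     (∀ x x' y y', L.prec x y → L.prec x y' → L.prec x' y → L.prec x' y' →
       ∃ z, L.prec x z ∧ L.prec x' z ∧ L.prec z y ∧ L.prec z y')) := by
  change (L.Interpolative ∧ L.Multiplicative ∧ L.Additive) ↔
    (L.RightAuxiliary ∧ L.RieszInterpolative)
  constructor
  · rintro ⟨hi, hm, ha⟩
    exact ⟨hm.rightAuxiliary, hi.rieszInterpolative hm.rightAuxiliary hm.precInf ha.supPrec⟩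
  · rintro ⟨hA, hR⟩
    exact ⟨hR.interpolative, hA.multiplicative hR.precInf, (hR.supPrec hA).additive⟩
end

section
/- A lattice (B, ⪯) with minimum 0, viewed with ≺ equal to ⪯, is a basic lattice if and only if it is a generalized Boolean algebra, i.e. a distributive, section complemented lattice: for x ⪯ z there exists w with w ∧ x = 0 and w ∨ x = z. -/
/-!
When `≺` is `≤`, every axiom of a basic lattice other than decomposition and complementation is a
basic fact about lattices (coinitiality, cofinality and interpolation are witnessed by `x` itself).
Decomposition is equivalent to distributivity: if `z ≤ x ⊔ y` then `z = (z ⊓ x) ⊔ (z ⊓ y)`, and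
conversely writing `a ⊓ (b ⊔ c) = b' ⊔ c'` with `b' ≤ b`, `c' ≤ c` gives `a ⊓ (b ⊔ c) ≤ a ⊓ b ⊔ a ⊓ c`.
Complementation for `x ≤ y ≤ z` follows from the section complement of `y` in `z`, which is
disjoint from `x` as well.
-/

section Lattice

variable {α : Type*} [Lattice α]

theorem exists_le_le_eq_sup_iff_inf_sup_left :
    (∀ x y z : α, z ≤ x ⊔ y → ∃ x' y', x' ≤ x ∧ y' ≤ y ∧ z = x' ⊔ y') ↔
      ∀ x y z : α, x ⊓ (y ⊔ z) = x ⊓ y ⊔ x ⊓ z := by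
  constructor
  · intro hdecomp a b c
    obtain ⟨b', c', hb', hc', heq⟩ := hdecomp b c (a ⊓ (b ⊔ c)) inf_le_right
    have hb'a : b' ≤ a := le_sup_left.trans (heq.ge.trans inf_le_left)
    have hc'a : c' ≤ a := le_sup_right.trans (heq.ge.trans inf_le_left)
    refine le_antisymm ?_ (sup_le (inf_le_inf_left a le_sup_left) (inf_le_inf_left a le_sup_right))
    calc a ⊓ (b ⊔ c) = b' ⊔ c' := heq
      _ ≤ a ⊓ b ⊔ a ⊓ c := sup_le_sup (le_inf hb'a hb') (le_inf hc'a hc')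
  · intro hdist x y z hz
    refine ⟨z ⊓ x, z ⊓ y, inf_le_right, inf_le_right, ?_⟩
    rw [← hdist, inf_eq_left.mpr hz]

variable [OrderBot α]

theorem exists_inf_eq_bot_sup_eq_of_le_of_le
    (hcompl : ∀ x z : α, x ≤ z → ∃ w : α, w ⊓ x = ⊥ ∧ w ⊔ x = z)
    {x y z : α} (hxy : x ≤ y) (hyz : y ≤ z) : ∃ w, w ⊓ x = ⊥ ∧ w ⊔ y = z := by
  obtain ⟨w, hwy, hw⟩ := hcompl y z hyz
  exact ⟨w, le_bot_iff.mp (hwy ▸ inf_le_inf_left w hxy), hw⟩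

end Lattice

def Lattice.toBasicLattice {B : Type} [Lattice B] [OrderBot B]
    (hdist : ∀ x y z : B, x ⊓ (y ⊔ z) = x ⊓ y ⊔ x ⊓ z)
    (hcompl : ∀ x z : B, x ≤ z → ∃ w : B, w ⊓ x = ⊥ ∧ w ⊔ x = z) : BasicLattice B where
  prec := (· ≤ ·)
  zero := ⊥
  inf := (· ⊓ ·)
  sup := (· ⊔ ·)
  trans := le_trans
  min _ := bot_le
  antisymm _ _ h₁ h₂ := le_antisymm (le_of_forall_le h₁) (le_of_forall_le h₂)
  inf_le_left _ _ _ h := h.trans inf_le_left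
  inf_le_right _ _ _ h := h.trans inf_le_right
  le_inf _ _ _ h₁ h₂ z hz := le_inf (h₁ z hz) (h₂ z hz)
  le_sup_left _ _ _ h := h.trans le_sup_left
  le_sup_right _ _ _ h := h.trans le_sup_right
  sup_le _ _ _ h₁ h₂ _ hz := hz.trans (sup_le (le_of_forall_le h₁) (le_of_forall_le h₂))
  coinit x hx := ⟨x, hx, le_rfl⟩
  cofin x := ⟨x, le_rfl⟩
  interp x _ h := ⟨x, le_rfl, h⟩
  mult _ _ _ _ := inf_le_inf
  add _ _ _ _ := sup_le_sup
  decomp := exists_le_le_eq_sup_iff_inf_sup_left.mpr hdist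
  compl _ _ _ := exists_inf_eq_bot_sup_eq_of_le_of_le hcompl

/-- A lattice with minimum, viewed with ≺ = ⪯ (i.e. ≤), is a basic lattice iff
it is a generalized Boolean algebra: distributive and section complemented. -/
theorem basicLattice_reflexive_iff_genBool {B : Type} [Lattice B] [OrderBot B] :
    (∃ L : BasicLattice B, L.prec = (fun x y : B => x ≤ y) ∧ L.zero = ⊥ ∧
      L.inf = (fun x y : B => x ⊓ y) ∧ L.sup = (fun x y : B => x ⊔ y))
    ↔
    ((∀ x y z : B, x ⊓ (y ⊔ z) = (x ⊓ y) ⊔ (x ⊓ z)) ∧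
     (∀ x z : B, x ≤ z → ∃ w : B, w ⊓ x = ⊥ ∧ w ⊔ x = z)) := by
  constructor
  · rintro ⟨⟨_, _, _, _, _, _, _, _, _, _, _, _, _, _, _, _, _, _, decomp, compl⟩,
      rfl, rfl, rfl, rfl⟩
    exact ⟨exists_le_le_eq_sup_iff_inf_sup_left.mp decomp,
      fun x z hxz => compl x x z le_rfl hxz⟩
  · rintro ⟨hdist, hcompl⟩
    exact ⟨Lattice.toBasicLattice hdist hcompl, rfl, rfl, rfl, rfl⟩
end

section
/- Let X be a locally compact Hausdorff space and B a basis of relatively compact open sets closed under finite unions and intersections, with ∅ ∈ B. Define O ⊂⊂ N iff closure(O) ⊆ N. Then B satisfies decomposition: if O ⊂⊂ M ∪ N with M, N ∈ B, then there exist M′, N′ ∈ B with closure(M′) ⊆ M, closure(N′) ⊆ N, and O = M′ ∪ N′. -/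
/-!
Since `closure O` is compact and covered by the open sets `M` and `N`, it splits as `K₁ ∪ K₂` with
compact `K₁ ⊆ M` and `K₂ ⊆ N`. By local compactness each `Kᵢ` lies in a basic open set whose closure
stays inside `M`, resp. `N`; intersecting these two basic sets with `O` gives the decomposition.
-/

open Set TopologicalSpace

namespace TopologicalSpace.IsTopologicalBasis

variable {X : Type*} [TopologicalSpace X] {B : Set (Set X)}

theorem exists_mem_of_isCompact_of_subset (hbasis : IsTopologicalBasis B)
    (hempty : (∅ : Set X) ∈ B) (hunion : ∀ O ∈ B, ∀ N ∈ B, O ∪ N ∈ B)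
    {K U : Set X} (hK : IsCompact K) (hU : IsOpen U) (hKU : K ⊆ U) :
    ∃ V ∈ B, K ⊆ V ∧ V ⊆ U := by
  have hlocal : ∀ x ∈ K, ∃ v ∈ B, x ∈ v ∧ v ⊆ U := fun x hx =>
    hbasis.exists_subset_of_mem_open (hKU hx) hU
  choose! v hvB hxv hvU using hlocal
  obtain ⟨t, htK, hKt⟩ := hK.elim_nhds_subcover v
    fun x hx => (hbasis.isOpen (hvB x hx)).mem_nhds (hxv x hx)
  refine ⟨t.sup v, Finset.sup_induction hempty hunion fun x hx => hvB x (htK x hx), ?_, ?_⟩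
  · simpa only [Finset.sup_set_eq_biUnion] using hKt
  · exact Finset.sup_le fun x hx => hvU x (htK x hx)

theorem exists_mem_closure_subset_of_isCompact [LocallyCompactSpace X] [RegularSpace X]
    (hbasis : IsTopologicalBasis B)
    (hempty : (∅ : Set X) ∈ B) (hunion : ∀ O ∈ B, ∀ N ∈ B, O ∪ N ∈ B)
    {K U : Set X} (hK : IsCompact K) (hU : IsOpen U) (hKU : K ⊆ U) :
    ∃ V ∈ B, K ⊆ V ∧ closure V ⊆ U := by
  obtain ⟨W, hW, hKW, hWU, -⟩ := exists_open_between_and_isCompact_closure hK hU hKU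
  obtain ⟨V, hVB, hKV, hVW⟩ := hbasis.exists_mem_of_isCompact_of_subset hempty hunion hK hW hKW
  exact ⟨V, hVB, hKV, (closure_mono hVW).trans hWU⟩

end TopologicalSpace.IsTopologicalBasis

theorem basis_decomposition_general {X : Type} [TopologicalSpace X]
    [LocallyCompactSpace X] [T2Space X]
    (B : Set (Set X))
    (hcpt : ∀ O ∈ B, IsCompact (closure O))
    (hempty : (∅ : Set X) ∈ B)
    (hunion : ∀ O ∈ B, ∀ N ∈ B, O ∪ N ∈ B)
    (hinter : ∀ O ∈ B, ∀ N ∈ B, O ∩ N ∈ B)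
    (hbasis : TopologicalSpace.IsTopologicalBasis B)
    (O M N : Set X) (hO : O ∈ B) (hM : M ∈ B) (hN : N ∈ B)
    (h : closure O ⊆ M ∪ N) :
    ∃ M' ∈ B, ∃ N' ∈ B, closure M' ⊆ M ∧ closure N' ⊆ N ∧ O = M' ∪ N' := by
  have hMo := hbasis.isOpen hM
  have hNo := hbasis.isOpen hN
  obtain ⟨K₁, K₂, hK₁, hK₂, hK₁M, hK₂N, hsplit⟩ := (hcpt O hO).binary_compact_cover hMo hNo h
  obtain ⟨M'', hM''B, hK₁M'', hM''M⟩ :=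
    hbasis.exists_mem_closure_subset_of_isCompact hempty hunion hK₁ hMo hK₁M
  obtain ⟨N'', hN''B, hK₂N'', hN''N⟩ :=
    hbasis.exists_mem_closure_subset_of_isCompact hempty hunion hK₂ hNo hK₂N
  have hO_sub : O ⊆ M'' ∪ N'' :=
    subset_closure.trans (hsplit ▸ union_subset_union hK₁M'' hK₂N'')
  refine ⟨O ∩ M'', hinter O hO M'' hM''B, O ∩ N'', hinter O hO N'' hN''B,
    (closure_mono inter_subset_right).trans hM''M,
    (closure_mono inter_subset_right).trans hN''N, ?_⟩
  rw [← inter_union_distrib_left, inter_eq_left.mpr hO_sub]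

/-- Decomposition for a relatively compact basic sublattice of the open sets of a
locally compact Hausdorff space: if closure O ⊆ M ∪ N with O, M, N ∈ B then
O = M' ∪ N' for some M', N' ∈ B with closure M' ⊆ M and closure N' ⊆ N. -/
theorem basis_decomposition {X : Type} [TopologicalSpace X]
    [LocallyCompactSpace X] [T2Space X]
    (B : Set (Set X))
    (hopen : ∀ O ∈ B, IsOpen O)
    (hcpt : ∀ O ∈ B, IsCompact (closure O))
    (hempty : (∅ : Set X) ∈ B)
    (hunion : ∀ O ∈ B, ∀ N ∈ B, O ∪ N ∈ B)
    (hinter : ∀ O ∈ B, ∀ N ∈ B, O ∩ N ∈ B)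
    (hbasis : TopologicalSpace.IsTopologicalBasis B)
    (O M N : Set X) (hO : O ∈ B) (hM : M ∈ B) (hN : N ∈ B)
    (h : closure O ⊆ M ∪ N) :
    ∃ M' ∈ B, ∃ N' ∈ B, closure M' ⊆ M ∧ closure N' ⊆ N ∧ O = M' ∪ N' :=
  basis_decomposition_general B hcpt hempty hunion hinter hbasis O M N hO hM hN h
end

section
/- Let X be a locally compact Hausdorff space and B a basis of relatively compact open sets closed under finite unions and intersections, with ∅ ∈ B. If M, N, O ∈ B satisfy closure(M) ⊆ N and closure(N) ⊆ O, then there exists L ∈ B with L ∩ M = ∅ and L ∪ N = O. -/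
/-!
The compact set `closure O \ N` misses `closure M`, so finitely many basic sets avoiding
`closure M` cover it; their union `U` is in `B`, and `L = U ∩ O` works, since every point
of `O` outside `N` lies in `U`.
-/

open TopologicalSpace Set

theorem TopologicalSpace.IsTopologicalBasis.exists_mem_between {X : Type*}
    [TopologicalSpace X] {B : Set (Set X)} (hB : IsTopologicalBasis B) (hsup : SupClosed B)
    (hempty : ∅ ∈ B) {K W : Set X} (hK : IsCompact K) (hW : IsOpen W) (hKW : K ⊆ W) :
    ∃ U ∈ B, K ⊆ U ∧ U ⊆ W := by
  have hcover : K ⊆ ⋃ U ∈ {U ∈ B | U ⊆ W}, U := fun x hx ↦ by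
    obtain ⟨U, hUB, hxU, hUW⟩ := hB.exists_subset_of_mem_open (hKW hx) hW
    exact mem_biUnion ⟨hUB, hUW⟩ hxU
  obtain ⟨t, htB, htfin, hKt⟩ :=
    hK.elim_finite_subcover_image (fun U hU ↦ hB.isOpen hU.1) hcover
  refine ⟨⋃₀ t, hsup.sSup_mem htfin hempty fun U hU ↦ (htB hU).1, ?_, ?_⟩
  · rwa [sUnion_eq_biUnion]
  · exact sUnion_subset fun U hU ↦ (htB hU).2

theorem basis_complementation_general {X : Type} [TopologicalSpace X]
    (B : Set (Set X))
    (hcpt : ∀ O ∈ B, IsCompact (closure O))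
    (hempty : (∅ : Set X) ∈ B)
    (hunion : ∀ O ∈ B, ∀ N ∈ B, O ∪ N ∈ B)
    (hinter : ∀ O ∈ B, ∀ N ∈ B, O ∩ N ∈ B)
    (hbasis : TopologicalSpace.IsTopologicalBasis B)
    (M N O : Set X) (hN : N ∈ B) (hO : O ∈ B)
    (h1 : closure M ⊆ N) (h2 : closure N ⊆ O) :
    ∃ L ∈ B, L ∩ M = ∅ ∧ L ∪ N = O := by
  have hK : IsCompact (closure O \ N) := (hcpt O hO).diff (hbasis.isOpen hN)
  have hKM : closure O \ N ⊆ (closure M)ᶜ := fun x hx hxM ↦ hx.2 (h1 hxM)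
  obtain ⟨U, hUB, hKU, hUM⟩ := hbasis.exists_mem_between hunion hempty hK
    isClosed_closure.isOpen_compl hKM
  refine ⟨U ∩ O, hinter U hUB O hO, ?_, ?_⟩
  · exact eq_empty_of_forall_notMem fun x ⟨⟨hxU, _⟩, hxM⟩ ↦ hUM hxU (subset_closure hxM)
  · refine (union_subset inter_subset_right (subset_closure.trans h2)).antisymm fun x hxO ↦ ?_
    by_cases hxN : x ∈ N
    · exact Or.inr hxN
    · exact Or.inl ⟨hKU ⟨subset_closure hxO, hxN⟩, hxO⟩

/-- Complementation for a relatively compact basic sublattice of the open sets of a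
locally compact Hausdorff space: if closure M ⊆ N and closure N ⊆ O with
M, N, O ∈ B then there is L ∈ B with L ∩ M = ∅ and L ∪ N = O. -/
theorem basis_complementation {X : Type} [TopologicalSpace X]
    [LocallyCompactSpace X] [T2Space X]
    (B : Set (Set X))
    (hopen : ∀ O ∈ B, IsOpen O)
    (hcpt : ∀ O ∈ B, IsCompact (closure O))
    (hempty : (∅ : Set X) ∈ B)
    (hunion : ∀ O ∈ B, ∀ N ∈ B, O ∪ N ∈ B)
    (hinter : ∀ O ∈ B, ∀ N ∈ B, O ∩ N ∈ B)
    (hbasis : TopologicalSpace.IsTopologicalBasis B)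
    (M N O : Set X) (hM : M ∈ B) (hN : N ∈ B) (hO : O ∈ B)
    (h1 : closure M ⊆ N) (h2 : closure N ⊆ O) :
    ∃ L ∈ B, L ∩ M = ∅ ∧ L ∪ N = O :=
  basis_complementation_general B hcpt hempty hunion hinter hbasis M N O hN hO h1 h2
end

section
/- Let B be a p0set (poset with minimum 0), B′ = B∖{0} with the Alexandroff topology whose closed sets are the upward-closed sets, and ρ : B → ℛ𝒪(B′) given by ρ(x) = interior(closure({y ≠ 0 : y ⪯ x})). Then for all finite F, G ⊆ B: F ⪅ G if and only if ⋀ρ[F] ⊆ ⋁ρ[G], where F ⪅ G means every common lower bound of F is 0 or has a nonzero common lower bound with some element of G. -/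
variable {B : Type} [PartialOrder B] [OrderBot B]

/-- B' = B ∖ {0}. -/
def Bp (B : Type) [PartialOrder B] [OrderBot B] : Type := {x : B // x ≠ ⊥}

/-- The Alexandroff topology on B' whose closed sets are the upward closed sets,
i.e. whose open sets are the downward closed sets. -/
instance : TopologicalSpace (Bp B) where
  IsOpen S := ∀ x ∈ S, ∀ y : Bp B, y.1 ≤ x.1 → y ∈ S
  isOpen_univ := fun _ _ _ _ => trivial
  isOpen_inter := fun _ _ hS hT x hx y hy =>
    ⟨hS x hx.1 y hy, hT x hx.2 y hy⟩
  isOpen_sUnion := fun _ h x hx y hy => by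
    obtain ⟨S, hS, hxS⟩ := hx
    exact ⟨S, hS, h S hS x hxS y hy⟩

/-- ρ(x) = interior(closure({y ≠ 0 : y ⪯ x})) ∈ ℛ𝒪(B'). -/
def rho (x : B) : Set (Bp B) := interior (closure {y : Bp B | y.1 ≤ x})

/-! In the Alexandroff topology of B′ the open sets are the lower sets, so `x ∈ interior (closure s)`
says that every nonzero `v ≤ x` lies above an element of `s`. The principal ideals
`{v | v ≤ y}` are open, and on open sets `interior ∘ closure` commutes with finite intersections
and does not change the closure of a union. Hence ⋀ρ[F] is the regular open hull of the set of
nonzero common lower bounds of F, ⋁ρ[G] that of the union of the ideals of G, and the inclusion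
says exactly that every nonzero common lower bound of F lies above a nonzero element below some
member of G. -/

open Set

section RegularOpen

variable {X : Type*} [TopologicalSpace X] {s t : Set X}

theorem IsOpen.interior_closure_inter (hs : IsOpen s) :
    interior (closure (s ∩ t)) = interior (closure s) ∩ interior (closure t) := by
  refine (subset_inter (interior_mono (closure_mono inter_subset_left))
    (interior_mono (closure_mono inter_subset_right))).antisymm ?_
  set U := interior (closure s) ∩ interior (closure t)
  have hU : IsOpen U := isOpen_interior.inter isOpen_interior
  have hUs : U ∩ s ⊆ closure (s ∩ t) := calc
    U ∩ s ⊆ U ∩ s ∩ closure t := fun x hx => ⟨hx, interior_subset hx.1.2⟩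
    _ ⊆ closure (U ∩ s ∩ t) := (hU.inter hs).inter_closure
    _ ⊆ closure (s ∩ t) := closure_mono fun x hx => ⟨hx.1.2, hx.2⟩
  refine interior_maximal ?_ hU
  calc U ⊆ U ∩ closure s := fun x hx => ⟨hx, interior_subset hx.1⟩
    _ ⊆ closure (U ∩ s) := hU.inter_closure
    _ ⊆ closure (s ∩ t) := closure_minimal hUs isClosed_closure

theorem interior_closure_biInter_finset {ι : Type*} (F : Finset ι) {s : ι → Set X}
    (hs : ∀ i ∈ F, IsOpen (s i)) :
    interior (closure (⋂ i ∈ F, s i)) = ⋂ i ∈ F, interior (closure (s i)) := by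
  classical
  induction F using Finset.induction_on with
  | empty => simp
  | insert a F _ ih =>
    simp only [Finset.forall_mem_insert] at hs
    rw [Finset.set_biInter_insert, Finset.set_biInter_insert,
      hs.1.interior_closure_inter, ih hs.2]

theorem closure_biUnion_interior_closure {ι : Type*} (I : Set ι) {s : ι → Set X}
    (hs : ∀ i ∈ I, IsOpen (s i)) :
    closure (⋃ i ∈ I, interior (closure (s i))) = closure (⋃ i ∈ I, s i) :=
  (closure_minimal (iUnion₂_subset fun _ hi =>
      interior_subset.trans (closure_mono (subset_biUnion_of_mem hi))) isClosed_closure).antisymm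
    (closure_mono (iUnion₂_mono fun i hi => (hs i hi).subset_interior_closure))

theorem IsOpen.interior_closure_subset_interior_closure_iff (hs : IsOpen s) :
    interior (closure s) ⊆ interior (closure t) ↔ s ⊆ interior (closure t) :=
  ⟨hs.subset_interior_closure.trans,
    fun h => interior_closure_idem (s := t) ▸ interior_mono (closure_mono h)⟩

end RegularOpen

namespace Topology.IsLowerSet

variable {α : Type*} [Preorder α] [TopologicalSpace α] [Topology.IsLowerSet α] {s t : Set α}

theorem mem_interior_iff_Iic_subset {a : α} : a ∈ interior s ↔ Iic a ⊆ s :=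
  ⟨fun h _ hb => interior_subset (isOpen_iff_isLowerSet.1 isOpen_interior hb h),
    fun h => interior_maximal h (isOpen_iff_isLowerSet.2 (isLowerSet_Iic a)) self_mem_Iic⟩

theorem mem_interior_closure_iff {a : α} :
    a ∈ interior (closure s) ↔ ∀ b ≤ a, ∃ c ∈ s, c ≤ b := by
  simp [mem_interior_iff_Iic_subset, closure_eq_upperClosure, subset_def]

theorem subset_interior_closure_iff (hs : IsLowerSet s) :
    s ⊆ interior (closure t) ↔ ∀ a ∈ s, ∃ c ∈ t, c ≤ a := by
  simp only [subset_def, mem_interior_closure_iff]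
  exact ⟨fun h a ha => h a ha a le_rfl, fun h a ha b hba => h b (hs hba ha)⟩

end Topology.IsLowerSet

namespace Bp

instance : PartialOrder (Bp B) := Subtype.partialOrder _

instance : Topology.IsLowerSet (Bp B) :=
  ⟨TopologicalSpace.ext <| funext fun _ => propext
    ⟨fun h _ _ hba ha => h _ ha _ hba, fun h _ ha _ hba => h hba ha⟩⟩

theorem isLowerSet_setOf_le (x : B) : IsLowerSet {v : Bp B | v.1 ≤ x} :=
  fun _ _ hvw hw => le_trans hvw hw

theorem isOpen_setOf_le (x : B) : IsOpen {v : Bp B | v.1 ≤ x} :=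
  Topology.IsLowerSet.isOpen_iff_isLowerSet.2 (isLowerSet_setOf_le x)

theorem biInter_rho (F : Finset B) :
    ⋂ y ∈ F, rho y = interior (closure (⋂ y ∈ F, {v : Bp B | v.1 ≤ y})) :=
  (interior_closure_biInter_finset F fun y _ => isOpen_setOf_le y).symm

theorem closure_biUnion_rho (G : Finset B) :
    closure (⋃ y ∈ G, rho y) = closure (⋃ y ∈ G, {v : Bp B | v.1 ≤ y}) :=
  closure_biUnion_interior_closure (G : Set B) fun y _ => isOpen_setOf_le y

end Bp

/-- For finite F, G ⊆ B, the covering relation F ⪅ G holds iff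
⋀ρ[F] ⊆ ⋁ρ[G] in the regular open sets of B'. -/
theorem cover_iff_rho {B : Type} [PartialOrder B] [OrderBot B] (F G : Finset B) :
    (∀ x : B, (∀ y ∈ F, x ≤ y) →
        x = ⊥ ∨ ∃ y ∈ G, ∃ z : B, z ≠ ⊥ ∧ z ≤ x ∧ z ≤ y)
    ↔ (⋂ y ∈ F, rho y) ⊆ interior (closure (⋃ y ∈ G, rho y)) := by
  rw [Bp.biInter_rho, Bp.closure_biUnion_rho, (isOpen_biInter_finset fun y _ =>
      Bp.isOpen_setOf_le y).interior_closure_subset_interior_closure_iff,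
    Topology.IsLowerSet.subset_interior_closure_iff
      (isLowerSet_iInter₂ fun y _ => Bp.isLowerSet_setOf_le y)]
  simp only [mem_iInter₂, mem_iUnion₂, exists_prop]
  constructor
  · intro h v hv
    obtain hv0 | ⟨g, hg, z, hz0, hzv, hzg⟩ := h v.1 hv
    · exact absurd hv0 v.2
    · exact ⟨⟨z, hz0⟩, ⟨g, hg, hzg⟩, hzv⟩
  · intro h x hx
    refine or_iff_not_imp_left.2 fun hx0 => ?_
    obtain ⟨c, ⟨g, hg, hcg⟩, hcx⟩ := h ⟨x, hx0⟩ hx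
    exact ⟨g, hg, c.1, c.2, hcx, hcg⟩
end

section
/- For generalized Boolean algebras A and B and a map β : B → A, the following are equivalent: (1) β is tightish (β(0) = 0 and β preserves the covering relation F ⪅ G for all finite nonempty F and finite G); (2) β is a lattice homomorphism with β(0) = 0; (3) β preserves ∧, ∨ and relative complement ∖. -/
/-!
In a generalized Boolean algebra, for finite `F` (nonempty) and `G` one has `Cov F G` iff
`⨅ F ≤ ⨆ G`: the element `⨅ F \ ⨆ G` is a lower bound of `F` disjoint from every element of `G`.
So preserving the covering relation means preserving inequalities `⨅ F ≤ ⨆ G`, which for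
`F = {x, y}, G = {x ⊓ y}` and `F = {x ⊔ y}, G = {x, y}` gives a lattice homomorphism, and
conversely a lattice homomorphism fixing `⊥` maps `⨅ F` to `⨅ β(F)` and `⨆ G` to `⨆ β(G)`.
Relative complements are then preserved because `x \ y` is the unique complement of `x ⊓ y`
in `[⊥, x]`.
-/

/-- The covering relation on subsets of a p0set: C ⪅ D iff every common lower
bound of C is 0 or has a nonzero common lower bound with some element of D. -/
def Cov {A : Type} [Preorder A] [OrderBot A] (C D : Set A) : Prop :=
  ∀ x : A, (∀ y ∈ C, x ≤ y) → x = ⊥ ∨ ∃ y ∈ D, ∃ z : A, z ≠ ⊥ ∧ z ≤ x ∧ z ≤ y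

section GeneralizedBooleanAlgebra

variable {A B : Type} [GeneralizedBooleanAlgebra A] [GeneralizedBooleanAlgebra B]

theorem cov_coe_finset_iff (F G : Finset A) (hF : F.Nonempty) :
    Cov (F : Set A) (G : Set A) ↔ F.inf' hF id ≤ G.sup id := by
  constructor
  · intro hcov
    have hlower : ∀ y ∈ (F : Set A), F.inf' hF id \ G.sup id ≤ y := fun y hy =>
      sdiff_le.trans (Finset.inf'_le id hy)
    rcases hcov _ hlower with hbot | ⟨y, hy, z, hz, hzx, hzy⟩
    · exact sdiff_eq_bot_iff.mp hbot
    · have hzG : z ≤ G.sup id := hzy.trans (Finset.le_sup (f := id) hy)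
      exact absurd (disjoint_self.mp ((disjoint_sdiff_self_left.mono_left hzx).mono_right hzG)) hz
  · intro hle x hx
    refine or_iff_not_imp_left.mpr fun hx0 => ?_
    have hxG : x ≤ G.sup id := (Finset.le_inf' hF id fun y hy => hx y hy).trans hle
    have hsup : G.sup (x ⊓ ·) = x := by
      rw [← Finset.sup_inf_distrib_left]
      exact inf_eq_left.mpr hxG
    obtain ⟨y, hy, hxy⟩ : ∃ y ∈ G, x ⊓ y ≠ ⊥ := by
      by_contra! h
      exact hx0 (hsup ▸ (Finset.sup_eq_bot_iff _ G).mpr h)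
    exact ⟨y, hy, x ⊓ y, hxy, inf_le_left, inf_le_right⟩

/-- Together with `β ⊥ = ⊥`, this is the paper's notion of a *tightish* map. -/
def PreservesCov (β : B → A) : Prop :=
  ∀ F G : Set B, F.Finite → G.Finite → F.Nonempty → Cov F G → Cov (β '' F) (β '' G)

theorem preservesCov_iff_inf'_le_sup {β : B → A} :
    PreservesCov β ↔ ∀ (F G : Finset B) (hF : F.Nonempty),
      F.inf' hF id ≤ G.sup id → F.inf' hF β ≤ G.sup β := by
  classical
  constructor
  · intro hβ F G hF hle
    have hcov := hβ F G F.finite_toSet G.finite_toSet hF ((cov_coe_finset_iff F G hF).mpr hle)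
    rw [← Finset.coe_image, ← Finset.coe_image,
      cov_coe_finset_iff _ _ (hF.image β), Finset.inf'_image, Finset.sup_image] at hcov
    exact hcov
  · intro hβ F' G' hF' hG' hF hcov
    obtain ⟨F, rfl⟩ := hF'.exists_finset_coe
    obtain ⟨G, rfl⟩ := hG'.exists_finset_coe
    rw [Finset.coe_nonempty] at hF
    rw [← Finset.coe_image, ← Finset.coe_image, cov_coe_finset_iff _ _ (hF.image β),
      Finset.inf'_image, Finset.sup_image]
    exact hβ F G hF ((cov_coe_finset_iff F G hF).mp hcov)

theorem PreservesCov.monotone {β : B → A} (hβ : PreservesCov β) : Monotone β :=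
  fun x y hxy => by
    simpa using
      preservesCov_iff_inf'_le_sup.mp hβ {x} {y} (Finset.singleton_nonempty x) (by simpa)

theorem PreservesCov.map_inf {β : B → A} (hβ : PreservesCov β) (x y : B) :
    β (x ⊓ y) = β x ⊓ β y := by
  refine le_antisymm (le_inf (hβ.monotone inf_le_left) (hβ.monotone inf_le_right)) ?_
  classical
  simpa using
    preservesCov_iff_inf'_le_sup.mp hβ {x, y} {x ⊓ y} (Finset.insert_nonempty x {y}) (by simp)

theorem PreservesCov.map_sup {β : B → A} (hβ : PreservesCov β) (x y : B) :
    β (x ⊔ y) = β x ⊔ β y := by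
  refine le_antisymm ?_ (sup_le (hβ.monotone le_sup_left) (hβ.monotone le_sup_right))
  classical
  simpa using
    preservesCov_iff_inf'_le_sup.mp hβ {x ⊔ y} {x, y} (Finset.singleton_nonempty _) (by simp)

theorem preservesCov_of_map_inf_sup {β : B → A} (hbot : β ⊥ = ⊥)
    (h : ∀ x y, β (x ⊓ y) = β x ⊓ β y ∧ β (x ⊔ y) = β x ⊔ β y) : PreservesCov β := by
  refine preservesCov_iff_inf'_le_sup.mpr fun F G hF hle => ?_
  change F.inf' hF (β ∘ id) ≤ G.sup (β ∘ id)
  rw [← Finset.apply_inf'_eq_inf'_comp hF β fun x y => (h x y).1,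
    ← Finset.apply_sup_eq_sup_comp β (fun x y => (h x y).2) hbot]
  exact Monotone.of_map_inf (fun x y => (h x y).1) hle

theorem preservesCov_iff_map_inf_sup {β : B → A} (hbot : β ⊥ = ⊥) :
    PreservesCov β ↔ ∀ x y, β (x ⊓ y) = β x ⊓ β y ∧ β (x ⊔ y) = β x ⊔ β y :=
  ⟨fun hβ x y => ⟨hβ.map_inf x y, hβ.map_sup x y⟩, preservesCov_of_map_inf_sup hbot⟩

theorem map_sdiff_of_map_inf_sup {β : B → A} (hbot : β ⊥ = ⊥)
    (hinf : ∀ x y, β (x ⊓ y) = β x ⊓ β y) (hsup : ∀ x y, β (x ⊔ y) = β x ⊔ β y) (x y : B) :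
    β (x \ y) = β x \ β y :=
  (sdiff_unique (by rw [← hinf, ← hsup, sup_inf_sdiff])
    (by rw [← hinf, ← hinf, inf_inf_sdiff, hbot])).symm

theorem map_bot_of_map_sdiff {β : B → A} (hsdiff : ∀ x y, β (x \ y) = β x \ β y) : β ⊥ = ⊥ := by
  simpa using hsdiff ⊥ ⊥

end GeneralizedBooleanAlgebra

/-- For generalized Boolean algebras A, B and β : B → A, the following are
equivalent: β is tightish (β 0 = 0 and β preserves the covering relation on
finite sets with nonempty left side); β is a lattice homomorphism with β 0 = 0;
β is a generalized Boolean homomorphism (preserves ∧, ∨ and ∖). -/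
theorem tightish_iff_latticeHom_iff_genBoolHom {A B : Type}
    [GeneralizedBooleanAlgebra A] [GeneralizedBooleanAlgebra B] (β : B → A) :
    ((β ⊥ = ⊥ ∧ ∀ F G : Set B, F.Finite → G.Finite → F.Nonempty →
        Cov F G → Cov (β '' F) (β '' G))
      ↔ (β ⊥ = ⊥ ∧ ∀ x y : B, β (x ⊓ y) = β x ⊓ β y ∧ β (x ⊔ y) = β x ⊔ β y)) ∧
    ((β ⊥ = ⊥ ∧ ∀ F G : Set B, F.Finite → G.Finite → F.Nonempty →
        Cov F G → Cov (β '' F) (β '' G))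
      ↔ (∀ x y : B, β (x ⊓ y) = β x ⊓ β y ∧ β (x ⊔ y) = β x ⊔ β y ∧
          β (x \ y) = β x \ β y)) := by
  have tightish_iff_latticeHom :
      (β ⊥ = ⊥ ∧ PreservesCov β) ↔
        (β ⊥ = ⊥ ∧ ∀ x y, β (x ⊓ y) = β x ⊓ β y ∧ β (x ⊔ y) = β x ⊔ β y) :=
    and_congr_right preservesCov_iff_map_inf_sup
  have latticeHom_iff_genBoolHom :
      (β ⊥ = ⊥ ∧ ∀ x y, β (x ⊓ y) = β x ⊓ β y ∧ β (x ⊔ y) = β x ⊔ β y) ↔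
        ∀ x y, β (x ⊓ y) = β x ⊓ β y ∧ β (x ⊔ y) = β x ⊔ β y ∧ β (x \ y) = β x \ β y := by
    constructor
    · rintro ⟨hbot, h⟩ x y
      exact ⟨(h x y).1, (h x y).2,
        map_sdiff_of_map_inf_sup hbot (fun x y => (h x y).1) (fun x y => (h x y).2) x y⟩
    · intro h
      exact ⟨map_bot_of_map_sdiff fun x y => (h x y).2.2,
        fun x y => ⟨(h x y).1, (h x y).2.1⟩⟩
  exact ⟨tightish_iff_latticeHom, tightish_iff_latticeHom.trans latticeHom_iff_genBoolHom⟩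
end

section
/- Let B be a p0set and β : B → {0,1} a nonzero tightish character. Then the support C = β⁻¹{1} is a filter-like set, and conversely the characteristic function of any maximal centred subset C ⊆ B (every finite F ⊆ C has a nonzero lower bound) is a tight character. -/
/-- A centred subset: every finite subset has a nonzero common lower bound. -/
def Centred {B : Type} [Preorder B] [OrderBot B] (C : Set B) : Prop :=
  ∀ F : Set B, F.Finite → F ⊆ C → ∃ z : B, z ≠ ⊥ ∧ ∀ x ∈ F, z ≤ x

lemma cov_prop_iff {S T : Set Prop} : Cov S T ↔ ((∀ p ∈ S, p) → ∃ q ∈ T, q) := by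
  constructor
  · intro h hS
    rcases h True (fun p hp _ => hS p hp) with hbot | ⟨q, hqT, z, hz, -, hzq⟩
    · exact absurd hbot (by simp)
    · exact ⟨q, hqT, hzq (by simpa using hz)⟩
  · intro h x hx
    by_cases hxx : x
    · obtain ⟨q, hqT, hq⟩ := h fun p hp => hx p hp hxx
      exact Or.inr ⟨q, hqT, True, by simp, fun _ => hxx, fun _ => hq⟩
    · exact Or.inl (by simpa using hxx)

lemma cov_image_iff {B : Type} (β : B → Prop) (F G : Set B) :
    Cov (β '' F) (β '' G) ↔ ((∀ x ∈ F, β x) → ∃ y ∈ G, β y) := by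
  simp only [cov_prop_iff, Set.forall_mem_image, Set.exists_mem_image]

section Poset

variable {B : Type} [PartialOrder B] [OrderBot B]

lemma cov_singleton_of_le {x y : B} (h : x ≤ y) : Cov {x} {y} := by
  intro w hw
  by_cases hwb : w = ⊥
  · exact Or.inl hwb
  · exact Or.inr ⟨y, rfl, w, hwb, le_rfl, (hw x rfl).trans h⟩

lemma cov_of_lowerBounds_subset_bot {F : Set B} (h : lowerBounds F ⊆ {⊥}) (G : Set B) :
    Cov F G :=
  fun _ hw => Or.inl (h fun _ hy => hw _ hy)

lemma Centred.bot_notMem {C : Set B} (hC : Centred C) : ⊥ ∉ C := fun hbot => by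
  obtain ⟨z, hz, hle⟩ := hC {⊥} (Set.finite_singleton ⊥) (by simpa)
  exact hz (le_bot_iff.mp (hle ⊥ rfl))

lemma Maximal.exists_finite_incompatible {C : Set B} (hC : Maximal Centred C) {y : B}
    (hy : y ∉ C) : ∃ E ⊆ C, E.Finite ∧ lowerBounds (insert y E) ⊆ {⊥} := by
  have hnc : ¬ Centred (insert y C) := fun hcent =>
    hy (hC.2 hcent (Set.subset_insert y C) (Set.mem_insert y C))
  simp only [Centred, not_forall, not_exists, not_and] at hnc
  obtain ⟨F, hF, hFsub, hbad⟩ := hnc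
  refine ⟨F ∩ C, Set.inter_subset_right, hF.inter_of_left C, fun w hw => ?_⟩
  by_contra hwb
  obtain ⟨x, hxF, hnle⟩ := hbad w hwb
  rcases hFsub hxF with rfl | hxC
  · exact hnle (hw (Set.mem_insert x _))
  · exact hnle (hw (Set.mem_insert_of_mem y ⟨hxF, hxC⟩))

lemma Maximal.exists_mem_of_cov {C F G : Set B} (hC : Maximal Centred C) (hF : F.Finite)
    (hG : G.Finite) (hFC : F ⊆ C) (hcov : Cov F G) : ∃ y ∈ G, y ∈ C := by
  by_contra! hno
  choose! E hEC hEfin hE using fun y (hyG : y ∈ G) => hC.exists_finite_incompatible (hno y hyG)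
  let F' := F ∪ ⋃ y ∈ G, E y
  have hF'C : F' ⊆ C := Set.union_subset hFC (Set.iUnion₂_subset hEC)
  obtain ⟨z, hz, hzF'⟩ := hC.1 F' (hF.union (hG.biUnion hEfin)) hF'C
  rcases hcov z (fun x hx => hzF' x (Or.inl hx)) with hzb | ⟨y, hyG, w, hw, hwz, hwy⟩
  · exact hz hzb
  · have hw_lower : w ∈ lowerBounds (insert y (E y)) := by
      rintro x (rfl | hx)
      · exact hwy
      · exact hwz.trans (hzF' x (Or.inr (Set.mem_biUnion hyG hx)))
    exact hw (hE y hyG hw_lower)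

end Poset

/-- The support of a nonzero tightish character on a p0set is upward closed and
centred; conversely, the characteristic function of any maximal centred subset
is a tight character. Here characters take values in the p0set Prop = {0,1}. -/
theorem tightish_character_support_and_maximal_centred
    {B : Type} [PartialOrder B] [OrderBot B] :
    (∀ β : B → Prop, ¬ β ⊥ → (∃ x, β x) →
      (∀ F G : Set B, F.Finite → G.Finite → F.Nonempty →
        Cov F G → Cov (β '' F) (β '' G)) →
      ((∀ x y : B, β x → x ≤ y → β y) ∧ Centred {x | β x})) ∧
    (∀ C : Set B, Centred C →
      (∀ D : Set B, C ⊆ D → Centred D → C = D) →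
      (¬ (⊥ ∈ C) ∧ ∀ F G : Set B, F.Finite → G.Finite →
        Cov F G → Cov ((· ∈ C) '' F) ((· ∈ C) '' G))) := by
  refine ⟨fun β _ ⟨x₀, hx₀⟩ htight => ⟨?_, ?_⟩, fun C hC hmax => ⟨hC.bot_notMem, ?_⟩⟩
  · intro x y hx hxy
    have := (cov_image_iff β _ _).mp (htight {x} {y} (Set.finite_singleton x)
      (Set.finite_singleton y) (Set.singleton_nonempty x) (cov_singleton_of_le hxy))
    simpa [hx] using this
  · -- `x₀` is inserted so that the tightish condition, which needs `F` nonempty, applies.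
    intro F hF hFβ
    by_contra! hno
    have hcov : Cov (insert x₀ F) ∅ := cov_of_lowerBounds_subset_bot (fun w hw => by
      by_contra hwb
      obtain ⟨x, hxF, hnle⟩ := hno w hwb
      exact hnle (hw (Set.mem_insert_of_mem x₀ hxF))) ∅
    have := (cov_image_iff β _ _).mp (htight _ ∅ (hF.insert x₀) Set.finite_empty
      (Set.insert_nonempty x₀ F) hcov)
    simpa using this (Set.forall_mem_insert.mpr ⟨hx₀, hFβ⟩)
  · have hCmax : Maximal Centred C := ⟨hC, fun D hD hCD => (hmax D hCD hD).ge⟩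
    intro F G hF hG hcov
    exact (cov_image_iff _ F G).mpr fun hFC => hCmax.exists_mem_of_cov hF hG hFC hcov
end

section
/- Let B be a pseudobasis of compact clopen subsets of a topological space X. Then for all finite families F, G ⊆ B: F ⪅ G (the covering relation w.r.t. inclusion order on B) holds if and only if ⋂F ⊆ ⋃G. -/
/-!
Since the nonempty members of `B` are dense among nonempty open sets, for open `O, N` some
nonempty `M ∈ B` lies below both iff `O ∩ N ≠ ∅`. So `F ⪅ G` says that every nonempty
`O ∈ B` below `⋂₀ F` meets `⋃₀ G`; as `⋂₀ F \ ⋃₀ G` is open, it would otherwise contain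
such an `O` missing `⋃₀ G`.
-/

section PiBase

variable {X : Type*} [TopologicalSpace X] {B : Set (Set X)}

theorem exists_mem_nonempty_subset_inter_iff
    (hcoinit : ∀ O : Set X, IsOpen O → O.Nonempty → ∃ N ∈ B, N.Nonempty ∧ N ⊆ O)
    {O N : Set X} (hO : IsOpen O) (hN : IsOpen N) :
    (∃ M ∈ B, M.Nonempty ∧ M ⊆ O ∧ M ⊆ N) ↔ (O ∩ N).Nonempty := by
  constructor
  · rintro ⟨M, -, hM, hMO, hMN⟩
    exact hM.mono (Set.subset_inter hMO hMN)
  · intro hON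
    obtain ⟨M, hMB, hM, hMON⟩ := hcoinit _ (hO.inter hN) hON
    exact ⟨M, hMB, hM, hMON.trans Set.inter_subset_left, hMON.trans Set.inter_subset_right⟩

theorem subset_iff_forall_mem_nonempty_inter
    (hcoinit : ∀ O : Set X, IsOpen O → O.Nonempty → ∃ N ∈ B, N.Nonempty ∧ N ⊆ O)
    {S T : Set X} (hST : IsOpen (S \ T)) :
    S ⊆ T ↔ ∀ O ∈ B, O ⊆ S → O.Nonempty → (O ∩ T).Nonempty := by
  constructor
  · intro hsub O _ hOS hO
    simpa [Set.inter_eq_left.mpr (hOS.trans hsub)] using hO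
  · intro h
    by_contra hS
    obtain ⟨N, hNB, hN, hNST⟩ := hcoinit _ hST (Set.sdiff_nonempty.mpr hS)
    obtain ⟨x, hxN, hxT⟩ := h N hNB (hNST.trans Set.sdiff_subset) hN
    exact (hNST hxN).2 hxT

end PiBase

theorem isOpen_sInter_diff_sUnion {X : Type*} [TopologicalSpace X] {F G : Set (Set X)}
    (hF : F.Finite) (hG : G.Finite) (hFopen : ∀ P ∈ F, IsOpen P)
    (hGclosed : ∀ N ∈ G, IsClosed N) : IsOpen (⋂₀ F \ ⋃₀ G) :=
  (hF.isOpen_sInter hFopen).sdiff (Set.sUnion_eq_biUnion ▸ hG.isClosed_biUnion hGclosed)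

theorem pseudobasis_cover_iff_general {X : Type} [TopologicalSpace X]
    (B : Set (Set X))
    (hclopen : ∀ O ∈ B, IsClopen O)
    (hcoinit : ∀ O : Set X, IsOpen O → O.Nonempty → ∃ N ∈ B, N.Nonempty ∧ N ⊆ O) :
    ∀ F G : Set (Set X), F.Finite → G.Finite → F ⊆ B → G ⊆ B →
      ((∀ O ∈ B, (∀ P ∈ F, O ⊆ P) →
          O = ∅ ∨ ∃ N ∈ G, ∃ M ∈ B, M.Nonempty ∧ M ⊆ O ∧ M ⊆ N)
        ↔ ⋂₀ F ⊆ ⋃₀ G) := by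
  intro F G hF hG hFB hGB
  have hopen : ∀ O ∈ B, IsOpen O := fun O hO => (hclopen O hO).isOpen
  rw [subset_iff_forall_mem_nonempty_inter hcoinit (isOpen_sInter_diff_sUnion hF hG
    (fun P hP => hopen P (hFB hP)) (fun N hN => (hclopen N (hGB hN)).isClosed))]
  refine forall₂_congr fun O hO => ?_
  rw [← Set.subset_sInter_iff, or_iff_not_imp_left, ← Set.not_nonempty_iff_eq_empty, not_not,
    Set.sUnion_eq_biUnion, Set.inter_iUnion₂, Set.nonempty_biUnion]
  refine imp_congr_right fun _ => imp_congr_right fun _ =>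
    exists_congr fun N => and_congr_right fun hN => ?_
  exact exists_mem_nonempty_subset_inter_iff hcoinit (hopen O hO) (hopen N (hGB hN))

/-- For a pseudobasis B of compact clopen sets and finite F, G ⊆ B, the covering
relation F ⪅ G (with respect to the inclusion order on B, with 0 = ∅) holds iff
⋂F ⊆ ⋃G (with the convention ⋂∅ = X). -/
theorem pseudobasis_cover_iff {X : Type} [TopologicalSpace X]
    (B : Set (Set X))
    (hclopen : ∀ O ∈ B, IsClopen O)
    (hcpt : ∀ O ∈ B, IsCompact O)
    (hempty : (∅ : Set X) ∈ B)
    (hcover : ⋃₀ B = Set.univ)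
    (hcoinit : ∀ O : Set X, IsOpen O → O.Nonempty → ∃ N ∈ B, N.Nonempty ∧ N ⊆ O)
    (hT0 : ∀ x y : X, x ≠ y → ∃ O ∈ B, (x ∈ O ∧ y ∉ O) ∨ (y ∈ O ∧ x ∉ O)) :
    ∀ F G : Set (Set X), F.Finite → G.Finite → F ⊆ B → G ⊆ B →
      ((∀ O ∈ B, (∀ P ∈ F, O ⊆ P) →
          O = ∅ ∨ ∃ N ∈ G, ∃ M ∈ B, M.Nonempty ∧ M ⊆ O ∧ M ⊆ N)
        ↔ ⋂₀ F ⊆ ⋃₀ G) :=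
  pseudobasis_cover_iff_general B hclopen hcoinit
end
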